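/- For the discrete Staircase-shaped noise with PMF p_θ(k) = ((1−ρ)/(2a))ρ^j on the stairs jaΔ ≤ k < (j+1)aΔ and −(j+1)aΔ ≤ k < −jaΔ, and any adjacency m with caΔ < m ≤ (c+1)aΔ for some nonnegative integer c, the supremum over m₀ ∈ [−m, m] ∩ Δℤ and k ∈ Δℤ of p_θ(k − m₀)/p_θ(k) equals ρ^{−⌈m/(aΔ)⌉}; hence the Staircase mechanism is ε-DP with ε = ⌈m/(aΔ)⌉ · log(1/ρ). -/
import Mathlib


/-- Discrete Staircase-shaped PMF on the lattice `Δℤ` (index `k : ℤ` stands for the point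
`k·Δ`): the value is `((1-ρ)/(2a))·ρ^j` on the stair `j·a ≤ k < (j+1)·a` for `k ≥ 0`, and on
the stair `-(j+1)·a ≤ k < -j·a` for `k < 0`. -/
noncomputable def stairPMF (a : ℕ) (ρ : ℝ) (k : ℤ) : ℝ :=
  if 0 ≤ k then ((1 - ρ) / (2 * (a : ℝ))) * ρ ^ (k.toNat / a)
  else ((1 - ρ) / (2 * (a : ℝ))) * ρ ^ (((-k).toNat - 1) / a)

/-- Auxiliary "distance-like" index for the staircase. -/
def stairN (k : ℤ) : ℕ := if 0 ≤ k then k.toNat else (-k).toNat - 1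

lemma stairPMF_eq (a : ℕ) (ρ : ℝ) (k : ℤ) :
    stairPMF a ρ k = ((1 - ρ) / (2 * (a : ℝ))) * ρ ^ (stairN k / a) := by
  unfold stairPMF stairN
  split_ifs <;> rfl

lemma stairN_lipschitz (k k' : ℤ) : stairN k ≤ stairN k' + (k - k').natAbs := by
  unfold stairN
  split_ifs <;> omega

lemma stairPMF_pos {a : ℕ} (ha : 0 < a) {ρ : ℝ} (hρ0 : 0 < ρ) (hρ1 : ρ < 1) (k : ℤ) :
    0 < stairPMF a ρ k := by
  rw [stairPMF_eq]
  have h1 : (0:ℝ) < (1 - ρ) / (2 * (a : ℝ)) := by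
    apply div_pos (by linarith)
    positivity
  exact mul_pos h1 (pow_pos hρ0 _)

/-- Key pointwise ratio bound. -/
lemma stairPMF_ratio_le {a : ℕ} (ha : 0 < a) {ρ : ℝ} (hρ0 : 0 < ρ) (hρ1 : ρ < 1)
    {M : ℤ} {c : ℕ} (hc2 : M ≤ ((c : ℤ) + 1) * a)
    {k j : ℤ} (hj : |j| ≤ M) :
    stairPMF a ρ (k - j) ≤ ρ ^ (-((c : ℤ) + 1)) * stairPMF a ρ k := by
  have hidx : stairN k / a ≤ stairN (k - j) / a + (c + 1) := by
    have h1 : stairN k ≤ stairN (k - j) + (c + 1) * a := by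
      have h2 := stairN_lipschitz k (k - j)
      have h3 : (k - (k - j)).natAbs = j.natAbs := by
        congr 1; ring
      have h4 : (j.natAbs : ℤ) ≤ ((c : ℤ) + 1) * a := by
        calc (j.natAbs : ℤ) = |j| := (Int.abs_eq_natAbs j).symm
        _ ≤ M := hj
        _ ≤ ((c : ℤ) + 1) * a := hc2
      have h5 : j.natAbs ≤ (c + 1) * a := by exact_mod_cast h4
      omega
    calc stairN k / a ≤ (stairN (k - j) + (c + 1) * a) / a := Nat.div_le_div_right h1
    _ = stairN (k - j) / a + (c + 1) := Nat.add_mul_div_right _ _ ha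
  rw [stairPMF_eq, stairPMF_eq, mul_comm (ρ ^ (-((c : ℤ) + 1))) _, mul_assoc]
  have hC : (0:ℝ) ≤ (1 - ρ) / (2 * (a : ℝ)) := by
    apply div_nonneg (by linarith)
    positivity
  apply mul_le_mul_of_nonneg_left _ hC
  set nk := stairN k / a with hnk
  set nkj := stairN (k - j) / a with hnkj
  have hz : (ρ : ℝ) ^ ((nkj : ℤ)) ≤
      ρ ^ (((nk : ℕ) : ℤ) + (-((c : ℤ) + 1))) := by
    apply zpow_le_zpow_right_of_le_one₀ hρ0 hρ1.le
    omega
  rw [zpow_add₀ (ne_of_gt hρ0)] at hz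
  rw [zpow_natCast, zpow_natCast] at hz
  exact hz

/-- For the discrete Staircase noise and adjacency `m = M·Δ` with `c·a·Δ < m ≤ (c+1)·a·Δ`
(`c ∈ ℕ`), the supremum of the adjacent probability ratios equals `ρ^{-(c+1)} = ρ^{-⌈m/(aΔ)⌉}`;
hence the Staircase mechanism is `ε`-DP with `ε = ⌈m/(aΔ)⌉ · log(1/ρ)`. -/
theorem staircase_mechanism_eps_dp
    (Δ : ℝ) (hΔ : 0 < Δ)
    (a : ℕ) (ha : 0 < a) (ρ : ℝ) (hρ0 : 0 < ρ) (hρ1 : ρ < 1)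
    (M : ℤ) (hM : 0 < M)
    (c : ℕ) (hc1 : (c : ℤ) * a < M) (hc2 : M ≤ ((c : ℤ) + 1) * a) :
    IsLUB {r : ℝ | ∃ k j : ℤ, |j| ≤ M ∧ r = stairPMF a ρ (k - j) / stairPMF a ρ k}
        (ρ ^ (-((c : ℤ) + 1))) ∧
      (∀ x y : ℤ, |x - y| ≤ M → ∀ O : Set ℤ,
        (∑' k : O, stairPMF a ρ ((k : ℤ) - x))
          ≤ Real.exp (((c : ℝ) + 1) * Real.log (1 / ρ)) *
              ∑' k : O, stairPMF a ρ ((k : ℤ) - y)) := by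
  have hpos := stairPMF_pos ha hρ0 hρ1 (ρ := ρ)
  have hratio : ∀ k j : ℤ, |j| ≤ M →
      stairPMF a ρ (k - j) / stairPMF a ρ k ≤ ρ ^ (-((c : ℤ) + 1)) := by
    intro k j hj
    rw [div_le_iff₀ (hpos k)]
    exact stairPMF_ratio_le ha hρ0 hρ1 hc2 hj
  constructor
  · apply IsGreatest.isLUB
    constructor
    · -- membership: witness k = (c+1)*a, j = M
      refine ⟨((c : ℤ) + 1) * a, M, le_of_eq (abs_of_pos hM), ?_⟩
      have hk1 : (0:ℤ) ≤ ((c : ℤ) + 1) * a := by positivity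
      have hk2 : (0:ℤ) ≤ ((c : ℤ) + 1) * a - M := sub_nonneg.mpr hc2
      have hidx1 : stairN (((c : ℤ) + 1) * a) / a = c + 1 := by
        unfold stairN
        rw [if_pos hk1]
        rw [show ((c : ℤ) + 1) * a = (((c + 1) * a : ℕ) : ℤ) by push_cast; ring,
          Int.toNat_natCast, Nat.mul_div_cancel _ ha]
      have hidx2 : stairN (((c : ℤ) + 1) * a - M) / a = 0 := by
        unfold stairN
        rw [if_pos hk2]
        apply Nat.div_eq_of_lt
        rw [show ((c : ℤ) + 1) * a - M = (c : ℤ) * a + a - M by ring]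
        omega
      rw [stairPMF_eq, stairPMF_eq, hidx1, hidx2]
      have hC : ((1 - ρ) / (2 * (a : ℝ))) ≠ 0 := by
        apply div_ne_zero (by linarith)
        have : (0:ℝ) < (a:ℝ) := by exact_mod_cast ha
        positivity
      rw [mul_div_mul_left _ _ hC, pow_zero, zpow_neg,
        show ((c : ℤ) + 1) = (((c + 1 : ℕ)) : ℤ) by push_cast; ring, zpow_natCast, one_div]
    · rintro r ⟨k, j, hj, rfl⟩
      exact hratio k j hj
  · intro x y hxy O
    have hxy' : |y - x| ≤ M := by rw [abs_sub_comm]; exact hxy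
    have hfg : ∀ k : O, stairPMF a ρ ((k : ℤ) - x) ≤
        ρ ^ (-((c : ℤ) + 1)) * stairPMF a ρ ((k : ℤ) - y) := by
      intro k
      have := stairPMF_ratio_le ha hρ0 hρ1 hc2 (k := (k : ℤ) - y) hxy
      have heq : (k : ℤ) - y - (x - y) = (k : ℤ) - x := by ring
      rwa [heq] at this
    have hgf : ∀ k : O, stairPMF a ρ ((k : ℤ) - y) ≤
        ρ ^ (-((c : ℤ) + 1)) * stairPMF a ρ ((k : ℤ) - x) := by
      intro k
      have := stairPMF_ratio_le ha hρ0 hρ1 hc2 (k := (k : ℤ) - x) hxy'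
      have heq : (k : ℤ) - x - (y - x) = (k : ℤ) - y := by ring
      rwa [heq] at this
    have hexp : Real.exp (((c : ℝ) + 1) * Real.log (1 / ρ)) = ρ ^ (-((c : ℤ) + 1)) := by
      have h1 : ((c : ℝ) + 1) = ((c + 1 : ℕ) : ℝ) := by push_cast; ring
      rw [h1, Real.exp_nat_mul, Real.exp_log (by positivity), one_div, inv_pow, zpow_neg,
        show ((c : ℤ) + 1) = (((c + 1 : ℕ)) : ℤ) by push_cast; ring, zpow_natCast]
    rw [hexp]
    by_cases hf : Summable (fun k : O => stairPMF a ρ ((k : ℤ) - x))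
    · have hg : Summable (fun k : O => stairPMF a ρ ((k : ℤ) - y)) := by
        apply Summable.of_nonneg_of_le (fun k => (hpos _).le) hgf
        exact hf.mul_left _
      calc (∑' k : O, stairPMF a ρ ((k : ℤ) - x))
          ≤ ∑' k : O, ρ ^ (-((c : ℤ) + 1)) * stairPMF a ρ ((k : ℤ) - y) :=
            Summable.tsum_le_tsum hfg hf (hg.mul_left _)
        _ = ρ ^ (-((c : ℤ) + 1)) * ∑' k : O, stairPMF a ρ ((k : ℤ) - y) := tsum_mul_left
    · rw [tsum_eq_zero_of_not_summable hf]
      have h1 : (0:ℝ) ≤ ∑' k : O, stairPMF a ρ ((k : ℤ) - y) :=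
        tsum_nonneg (fun k => (hpos _).le)
      have h2 : (0:ℝ) ≤ ρ ^ (-((c : ℤ) + 1)) := by positivity
      exact mul_nonneg h2 h1
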